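/- Under the Markov assumption X_S − X_0 − X_T for disjoint S,T ⊆ L, if two agents i ≠ j satisfy p_{X_i|X_0} = p_{X_j|X_0}, then for every S ⊆ L with i,j ∉ S, v(S∪{i}) = v(S∪{j}), where v(S) = I(X_S; X_0 | X_{L\S}). That is, i and j are symmetric players of the game. -/

import Mathlib

/-!
The Markov assumption makes the joint law of `(X_L, X_0)` factor as
`p(x_0) ∏_l p(x_l | x_0)`, so when `X_i` and `X_j` have the same conditional law given `X_0`,
exchanging them leaves the joint law unchanged. Every entropy in `v(S)` depends only on that
joint law, so `v` is invariant under the transposition of `i` and `j`, which maps `S ∪ {i}`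
to `S ∪ {j}`.
-/

noncomputable section
open Finset
open scoped Classical BigOperators

/-- Probability of an event under a pmf on a finite sample space. -/
def Pr {Ω : Type} [Fintype Ω] (p : Ω → ℝ) (E : Ω → Prop) : ℝ :=
  ∑ ω : Ω, if E ω then p ω else 0

/-- `p` is a probability mass function. -/
def IsPMF {Ω : Type} [Fintype Ω] (p : Ω → ℝ) : Prop :=
  (∀ ω, 0 ≤ p ω) ∧ (∑ ω : Ω, p ω) = 1

/-- Shannon entropy of a finitely-valued random variable `X` under pmf `p`. -/
def ent {Ω α : Type} [Fintype Ω] [Fintype α] (p : Ω → ℝ) (X : Ω → α) : ℝ :=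
  -∑ a : α, Pr p (fun ω => X ω = a) * Real.log (Pr p (fun ω => X ω = a))

/-- Conditional Shannon entropy `H(X|Y)`. -/
def condEnt {Ω α β : Type} [Fintype Ω] [Fintype α] [Fintype β]
    (p : Ω → ℝ) (X : Ω → α) (Y : Ω → β) : ℝ :=
  ent p (fun ω => (X ω, Y ω)) - ent p Y

/-- Mutual information `I(X;Y)`. -/
def mi {Ω α β : Type} [Fintype Ω] [Fintype α] [Fintype β]
    (p : Ω → ℝ) (X : Ω → α) (Y : Ω → β) : ℝ :=
  ent p X + ent p Y - ent p (fun ω => (X ω, Y ω))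

/-- Conditional mutual information `I(X;Y|Z)`. -/
def cmi {Ω α β γ : Type} [Fintype Ω] [Fintype α] [Fintype β] [Fintype γ]
    (p : Ω → ℝ) (X : Ω → α) (Y : Ω → β) (Z : Ω → γ) : ℝ :=
  ent p (fun ω => (X ω, Z ω)) + ent p (fun ω => (Y ω, Z ω))
    - ent p (fun ω => (X ω, Y ω, Z ω)) - ent p Z

/-- `X` and `Y` are conditionally independent given `Z` (Markov chain `X - Z - Y`). -/
def CondIndep {Ω α β γ : Type} [Fintype Ω] [Fintype α] [Fintype β] [Fintype γ]
    (p : Ω → ℝ) (X : Ω → α) (Y : Ω → β) (Z : Ω → γ) : Prop :=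
  ∀ (a : α) (b : β) (c : γ),
    Pr p (fun ω => X ω = a ∧ Y ω = b ∧ Z ω = c) * Pr p (fun ω => Z ω = c)
      = Pr p (fun ω => X ω = a ∧ Z ω = c) * Pr p (fun ω => Y ω = b ∧ Z ω = c)

/-- The tuple random variable `X_S = (X_l)_{l ∈ S}`. -/
def XS {Ω L 𝒳 : Type} [Fintype Ω] (X : L → Ω → 𝒳) (S : Finset L) :
    Ω → (S → 𝒳) :=
  fun ω i => X i ω

/-- The value function of the secret-key generation game:
`v(S) = I(X_S; X_0 | X_{L\S})`. -/
def vGame {Ω L 𝒳 β : Type} [Fintype Ω] [Fintype L] [DecidableEq L] [Fintype 𝒳] [Fintype β]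
    (p : Ω → ℝ) (X : L → Ω → 𝒳) (X0 : Ω → β) (S : Finset L) : ℝ :=
  cmi p (XS X S) X0 (XS X Sᶜ)

section Entropy

variable {Ω : Type} [Fintype Ω]

lemma Pr_congr {p : Ω → ℝ} {E F : Ω → Prop} (h : ∀ ω, E ω ↔ F ω) : Pr p E = Pr p F :=
  sum_congr rfl fun ω _ => if_congr (h ω) rfl rfl

lemma Pr_eq_zero_of_imp {p : Ω → ℝ} (hp : ∀ ω, 0 ≤ p ω) {E F : Ω → Prop}
    (h : ∀ ω, E ω → F ω) (hF : Pr p F = 0) : Pr p E = 0 := by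
  refine le_antisymm (hF ▸ sum_le_sum fun ω _ => ?_) (sum_nonneg fun ω _ => ?_) <;>
    split_ifs <;> simp_all

lemma Pr_comp_eq_sum {γ δ : Type} [Fintype γ] (p : Ω → ℝ) (Y : Ω → γ) (g : γ → δ) (a : δ) :
    Pr p (fun ω => g (Y ω) = a) = ∑ v : γ, if g v = a then Pr p (fun ω => Y ω = v) else 0 := by
  unfold Pr
  rw [← sum_fiberwise univ Y]
  refine sum_congr rfl fun v _ => ?_
  by_cases hv : g v = a <;> simp +contextual [hv, sum_filter]

def SameLaw {γ : Type} (p : Ω → ℝ) (Y Y' : Ω → γ) : Prop :=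
  ∀ v, Pr p (fun ω => Y ω = v) = Pr p (fun ω => Y' ω = v)

lemma SameLaw.comp {γ δ : Type} [Fintype γ] {p : Ω → ℝ} {Y Y' : Ω → γ}
    (h : SameLaw p Y Y') (g : γ → δ) : SameLaw p (fun ω => g (Y ω)) (fun ω => g (Y' ω)) := by
  intro a
  rw [Pr_comp_eq_sum p Y g, Pr_comp_eq_sum p Y' g]
  simp only [h _]

lemma SameLaw.ent_eq {γ : Type} [Fintype γ] {p : Ω → ℝ} {Y Y' : Ω → γ}
    (h : SameLaw p Y Y') : ent p Y = ent p Y' := by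
  simp only [ent, h _]

lemma ent_comp_equiv {γ δ : Type} [Fintype γ] [Fintype δ] (p : Ω → ℝ) (Z : Ω → γ) (e : γ ≃ δ) :
    ent p (fun ω => e (Z ω)) = ent p Z := by
  unfold ent
  rw [← e.sum_comp]
  simp only [e.apply_eq_iff_eq]

lemma cmi_eq_of_sameLaw {α β γ : Type} [Fintype α] [Fintype β] [Fintype γ]
    {p : Ω → ℝ} {X : Ω → α} {Y : Ω → β} {Z : Ω → γ} {X' : Ω → α} {Y' : Ω → β} {Z' : Ω → γ}
    (h : SameLaw p (fun ω => (X ω, Y ω, Z ω)) (fun ω => (X' ω, Y' ω, Z' ω))) :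
    cmi p X Y Z = cmi p X' Y' Z' := by
  unfold cmi
  rw [h.ent_eq, (h.comp fun t => (t.1, t.2.2)).ent_eq, (h.comp fun t => (t.2.1, t.2.2)).ent_eq,
    (h.comp fun t => t.2.2).ent_eq]

lemma cmi_comp_equiv {α β γ α' β' γ' : Type} [Fintype α] [Fintype β] [Fintype γ]
    [Fintype α'] [Fintype β'] [Fintype γ'] (p : Ω → ℝ) (X : Ω → α) (Y : Ω → β) (Z : Ω → γ)
    (e₁ : α ≃ α') (e₂ : β ≃ β') (e₃ : γ ≃ γ') :
    cmi p (fun ω => e₁ (X ω)) (fun ω => e₂ (Y ω)) (fun ω => e₃ (Z ω)) = cmi p X Y Z := by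
  unfold cmi
  rw [← ent_comp_equiv p (fun ω => (X ω, Z ω)) (e₁.prodCongr e₃),
    ← ent_comp_equiv p (fun ω => (Y ω, Z ω)) (e₂.prodCongr e₃),
    ← ent_comp_equiv p (fun ω => (X ω, Y ω, Z ω)) (e₁.prodCongr (e₂.prodCongr e₃)),
    ← ent_comp_equiv p Z e₃]
  rfl

end Entropy

lemma XS_eq_iff {Ω L 𝒳 : Type} [Fintype Ω] (X : L → Ω → 𝒳) (U : Finset L) (f : L → 𝒳)
    (ω : Ω) :
    XS X U ω = (fun l : U => f l) ↔ ∀ l ∈ U, X l ω = f l := by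
  simp [XS, funext_iff]

section Markov

variable {Ω L 𝒳 β : Type} [Fintype Ω] [DecidableEq L] [Fintype 𝒳] [Fintype β]
  {p : Ω → ℝ} {X : L → Ω → 𝒳} {X0 : Ω → β}

-- `P(X_U = f, X0 = c) = P(X0 = c) ∏_{l ∈ U} P(X_l = f l | X0 = c)`, cleared of denominators
-- so that it also holds when `P(X0 = c) = 0`.
lemma pow_card_mul_Pr_eq_mul_prod
    (hM : ∀ S T : Finset L, Disjoint S T → CondIndep p (XS X S) (XS X T) X0)
    (U : Finset L) (f : L → 𝒳) (c : β) :
    Pr p (fun ω => X0 ω = c) ^ #U * Pr p (fun ω => (∀ l ∈ U, X l ω = f l) ∧ X0 ω = c)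
      = Pr p (fun ω => X0 ω = c) * ∏ l ∈ U, Pr p (fun ω => X l ω = f l ∧ X0 ω = c) := by
  induction U using Finset.induction_on with
  | empty => simp [Pr]
  | @insert m U hm ih =>
    have hci := hM {m} U (disjoint_singleton_left.mpr hm) (fun l => f l) (fun l => f l) c
    simp only [XS_eq_iff, forall_eq, mem_singleton, ← and_assoc] at hci
    simp only [forall_mem_insert]
    rw [card_insert_of_notMem hm, prod_insert hm]
    linear_combination Pr p (fun ω => X0 ω = c) ^ #U * hci
      + Pr p (fun ω => X m ω = f m ∧ X0 ω = c) * ih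

lemma Pr_joint_eq_of_prod_eq [Fintype L] (hp : ∀ ω, 0 ≤ p ω)
    (hM : ∀ S T : Finset L, Disjoint S T → CondIndep p (XS X S) (XS X T) X0)
    {f g : L → 𝒳} {c : β}
    (h : ∏ l, Pr p (fun ω => X l ω = f l ∧ X0 ω = c)
      = ∏ l, Pr p (fun ω => X l ω = g l ∧ X0 ω = c)) :
    Pr p (fun ω => (∀ l, X l ω = f l) ∧ X0 ω = c)
      = Pr p (fun ω => (∀ l, X l ω = g l) ∧ X0 ω = c) := by
  by_cases hc : Pr p (fun ω => X0 ω = c) = 0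
  · rw [Pr_eq_zero_of_imp hp (fun _ h => h.2) hc, Pr_eq_zero_of_imp hp (fun _ h => h.2) hc]
  · have hf := pow_card_mul_Pr_eq_mul_prod hM univ f c
    have hg := pow_card_mul_Pr_eq_mul_prod hM univ g c
    simp only [mem_univ, forall_const] at hf hg
    exact mul_left_cancel₀ (pow_ne_zero _ hc) (by rw [hf, hg, h])

lemma sameLaw_comp_perm [Fintype L] (hp : ∀ ω, 0 ≤ p ω)
    (hM : ∀ S T : Finset L, Disjoint S T → CondIndep p (XS X S) (XS X T) X0) (σ : Equiv.Perm L)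
    (hσ : ∀ l a c,
      Pr p (fun ω => X (σ l) ω = a ∧ X0 ω = c) = Pr p (fun ω => X l ω = a ∧ X0 ω = c)) :
    SameLaw p (fun ω => (fun l => X (σ l) ω, X0 ω)) (fun ω => (fun l => X l ω, X0 ω)) := by
  rintro ⟨f, c⟩
  have hperm : ∀ ω, (∀ l, X (σ l) ω = f l) ↔ ∀ l, X l ω = f (σ.symm l) := fun ω =>
    ⟨fun h l => by simpa using h (σ.symm l), fun h l => by simpa using h (σ l)⟩
  simp only [Prod.ext_iff, funext_iff]
  rw [Pr_congr fun ω => and_congr_left' (hperm ω)]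
  refine Pr_joint_eq_of_prod_eq hp hM ?_
  rw [← Equiv.prod_comp σ]
  simp only [Equiv.symm_apply_apply, hσ]

lemma vGame_eq_of_sameLaw [Fintype L] {Y : L → Ω → 𝒳}
    (h : SameLaw p (fun ω => (fun l => X l ω, X0 ω)) (fun ω => (fun l => Y l ω, X0 ω)))
    (S : Finset L) : vGame p X X0 S = vGame p Y X0 S :=
  cmi_eq_of_sameLaw <|
    h.comp fun v => (fun l : S => v.1 l, v.2, fun l : ↥Sᶜ => v.1 l)

lemma vGame_comp_perm [Fintype L] (σ : Equiv.Perm L) {S T : Finset L}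
    (h : ∀ l, l ∈ T ↔ σ l ∈ S) :
    vGame p (fun l => X (σ l)) X0 T = vGame p X X0 S := by
  have hc : ∀ l, l ∈ Tᶜ ↔ σ l ∈ Sᶜ := fun l => by simp [h l]
  exact cmi_comp_equiv p (XS X S) X0 (XS X Sᶜ) ((σ.subtypeEquiv h).symm.arrowCongr (.refl 𝒳))
    (.refl β) ((σ.subtypeEquiv hc).symm.arrowCongr (.refl 𝒳))

end Markov

lemma mem_insert_iff_swap_mem_insert {L : Type} [DecidableEq L] {S : Finset L} {i j : L}
    (hi : i ∉ S) (hj : j ∉ S) (l : L) : l ∈ insert i S ↔ Equiv.swap i j l ∈ insert j S := by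
  rcases eq_or_ne l i with rfl | hli
  · simp
  rcases eq_or_ne l j with rfl | hlj
  · simp [hi, hj, eq_comm]
  · simp [Equiv.swap_apply_of_ne_of_ne hli hlj, hli, hlj]

theorem statement12_general {Ω L 𝒳 β : Type} [Fintype Ω] [Fintype L] [DecidableEq L] [Fintype 𝒳] [Fintype β]
    (p : Ω → ℝ) (hp : IsPMF p) (X : L → Ω → 𝒳) (X0 : Ω → β)
    (hM : ∀ S T : Finset L, Disjoint S T → CondIndep p (XS X S) (XS X T) X0)
    (i j : L)
    (hcond : ∀ (a : 𝒳) (c : β),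
      Pr p (fun ω => X i ω = a ∧ X0 ω = c) = Pr p (fun ω => X j ω = a ∧ X0 ω = c)) :
    ∀ S : Finset L, i ∉ S → j ∉ S →
      vGame p X X0 (insert i S) = vGame p X X0 (insert j S) := by
  intro S hiS hjS
  have hswap : ∀ l a c, Pr p (fun ω => X (Equiv.swap i j l) ω = a ∧ X0 ω = c)
      = Pr p (fun ω => X l ω = a ∧ X0 ω = c) := by
    intro l a c
    rcases eq_or_ne l i with rfl | hli
    · simp [hcond]
    rcases eq_or_ne l j with rfl | hlj
    · simp [hcond]
    · rw [Equiv.swap_apply_of_ne_of_ne hli hlj]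
  calc vGame p X X0 (insert i S)
      = vGame p (fun l => X (Equiv.swap i j l)) X0 (insert i S) :=
        (vGame_eq_of_sameLaw (sameLaw_comp_perm hp.1 hM _ hswap) _).symm
    _ = vGame p X X0 (insert j S) :=
        vGame_comp_perm _ (mem_insert_iff_swap_mem_insert hiS hjS)

/-- under the Markov assumption, if agents `i ≠ j` satisfy
`p_{X_i|X_0} = p_{X_j|X_0}` (equivalently, equality of the joint distributions with `X_0`),
then `v(S∪{i}) = v(S∪{j})` for every `S` not containing `i`, `j`:
`i` and `j` are symmetric players. -/
theorem statement12 {Ω L 𝒳 β : Type} [Fintype Ω] [Fintype L] [DecidableEq L] [Fintype 𝒳] [Fintype β]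
    (p : Ω → ℝ) (hp : IsPMF p) (X : L → Ω → 𝒳) (X0 : Ω → β)
    (hM : ∀ S T : Finset L, Disjoint S T → CondIndep p (XS X S) (XS X T) X0)
    (i j : L) (hij : i ≠ j)
    (hcond : ∀ (a : 𝒳) (c : β),
      Pr p (fun ω => X i ω = a ∧ X0 ω = c) = Pr p (fun ω => X j ω = a ∧ X0 ω = c)) :
    ∀ S : Finset L, i ∉ S → j ∉ S →
      vGame p X X0 (insert i S) = vGame p X X0 (insert j S) :=
  statement12_general p hp X X0 hM i j hcond
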